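/- arXiv:2005.12430 — 7 statements merged into one kernel-verified Lean document; each statement's English description precedes it below -/
import Mathlib

section
/- Let μ₀ be a commutative and associative multiplication on A and let (φ_i)_{i≥0} be a formal deformation of μ₀, i.e. φ₀ = μ₀ and for every k ≥ 0 and all x,y,z ∈ A: ∑_{i+j=k} [φ_i(x,φ_j(y,z)) − φ_i(φ_j(x,y),z)] = 0. Then the skew-symmetric part ψ₁ of φ₁ satisfies the Jacobi identity and the Leibniz identity ψ₁(μ₀(x,y),z) = μ₀(x,ψ₁(y,z)) + μ₀(y,ψ₁(x,z)) for all x,y,z ∈ A; that is, (A,μ₀,ψ₁) is a Poisson algebra. -/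
open Finset

/-- The skew-symmetric part of a bilinear multiplication. -/
def skewPart {K A : Type*} [Field K] [AddCommGroup A] [Module K A]
    (φ : A →ₗ[K] A →ₗ[K] A) (x y : A) : A :=
  φ x y - φ y x

/-!
Expanding the deformation equation in degrees 1 and 2 shows that `φ₁` is a Hochschild
2-cocycle of `μ₀` and that the associator of `φ₁` is minus the Hochschild coboundary of `φ₂`.
For commutative `μ₀` the cocycle condition at `(x,y,z)`, `(z,x,y)` and `(x,z,y)` combines to the
Leibniz rule for `ψ₁`. The Jacobiator of the skew-symmetric part of any multiplication is the
alternating sum of its associators over the six orderings of the arguments, and for commutative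
`μ₀` the alternating sum of a Hochschild coboundary vanishes; hence `ψ₁` satisfies Jacobi.
-/

namespace FormalDeformation

variable {K A : Type*} [Field K] [AddCommGroup A] [Module K A]

def associator (f : A →ₗ[K] A →ₗ[K] A) (a b c : A) : A :=
  f a (f b c) - f (f a b) c

def hochschildCoboundary (μ f : A →ₗ[K] A →ₗ[K] A) (a b c : A) : A :=
  μ a (f b c) - f (μ a b) c + f a (μ b c) - μ (f a b) c

theorem hochschildCoboundary_eq_zero_of_deformation {μ : A →ₗ[K] A →ₗ[K] A}
    {φ : ℕ → A →ₗ[K] A →ₗ[K] A} (h0 : φ 0 = μ)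
    (hdef : ∀ x y z : A, ∑ p ∈ antidiagonal 1,
      (φ p.1 x (φ p.2 y z) - φ p.1 (φ p.2 x y) z) = 0) (a b c : A) :
    hochschildCoboundary μ (φ 1) a b c = 0 := by
  have h := hdef a b c
  simp only [Nat.sum_antidiagonal_succ, Nat.antidiagonal_zero, sum_singleton, zero_add, h0] at h
  rw [← h, hochschildCoboundary]
  abel

theorem associator_add_hochschildCoboundary_eq_zero_of_deformation {μ : A →ₗ[K] A →ₗ[K] A}
    {φ : ℕ → A →ₗ[K] A →ₗ[K] A} (h0 : φ 0 = μ)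
    (hdef : ∀ x y z : A, ∑ p ∈ antidiagonal 2,
      (φ p.1 x (φ p.2 y z) - φ p.1 (φ p.2 x y) z) = 0) (a b c : A) :
    associator (φ 1) a b c + hochschildCoboundary μ (φ 2) a b c = 0 := by
  have h := hdef a b c
  simp only [Nat.sum_antidiagonal_succ, Nat.antidiagonal_zero, sum_singleton, zero_add, Nat.reduceAdd, h0] at h
  rw [← h, associator, hochschildCoboundary]
  abel

theorem skewPart_jacobi_eq_alternating_sum_associator (f : A →ₗ[K] A →ₗ[K] A) (x y z : A) :
    skewPart f x (skewPart f y z) + skewPart f y (skewPart f z x) +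
        skewPart f z (skewPart f x y) =
      associator f x y z - associator f x z y + associator f y z x - associator f y x z +
        associator f z x y - associator f z y x := by
  simp only [skewPart, associator, map_sub, LinearMap.sub_apply]
  abel

theorem alternating_sum_hochschildCoboundary_eq_zero {μ : A →ₗ[K] A →ₗ[K] A}
    (hcomm : ∀ x y : A, μ x y = μ y x) (g : A →ₗ[K] A →ₗ[K] A) (x y z : A) :
    hochschildCoboundary μ g x y z - hochschildCoboundary μ g x z y +
        hochschildCoboundary μ g y z x - hochschildCoboundary μ g y x z +
        hochschildCoboundary μ g z x y - hochschildCoboundary μ g z y x = 0 := by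
  have hμg : ∀ a b c : A, μ (g a b) c = μ c (g a b) := fun a b c => hcomm _ _
  simp only [hochschildCoboundary, hμg]
  rw [hcomm z y, hcomm z x, hcomm y x]
  abel

theorem skewPart_jacobi_of_associator_add_hochschildCoboundary_eq_zero
    {μ f : A →ₗ[K] A →ₗ[K] A} (hcomm : ∀ x y : A, μ x y = μ y x) (g : A →ₗ[K] A →ₗ[K] A)
    (h : ∀ a b c : A, associator f a b c + hochschildCoboundary μ g a b c = 0) (x y z : A) :
    skewPart f x (skewPart f y z) + skewPart f y (skewPart f z x) +
      skewPart f z (skewPart f x y) = 0 := by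
  rw [skewPart_jacobi_eq_alternating_sum_associator, ← neg_eq_zero,
    ← alternating_sum_hochschildCoboundary_eq_zero hcomm g x y z]
  simp only [eq_neg_of_add_eq_zero_left (h _ _ _)]
  abel

theorem skewPart_leibniz_of_hochschildCoboundary_eq_zero {μ f : A →ₗ[K] A →ₗ[K] A}
    (hcomm : ∀ x y : A, μ x y = μ y x) (hf : ∀ a b c : A, hochschildCoboundary μ f a b c = 0)
    (x y z : A) :
    skewPart f (μ x y) z = μ x (skewPart f y z) + μ y (skewPart f x z) := by
  have hxyz := hf x y z
  have hzxy := hf z x y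
  have hxzy := hf x z y
  simp only [hochschildCoboundary] at hxyz hzxy hxzy
  rw [hcomm (f x y) z] at hxyz
  rw [hcomm (f z x) y, hcomm z x] at hzxy
  rw [hcomm (f x z) y, hcomm z y] at hxzy
  simp only [skewPart, map_sub]
  linear_combination (norm := abel) -hxyz - hzxy + hxzy

end FormalDeformation

open FormalDeformation in
theorem deformation_gives_poisson_general {K A : Type*} [Field K]
    [AddCommGroup A] [Module K A]
    (μ₀ : A →ₗ[K] A →ₗ[K] A)
    (hcomm : ∀ x y : A, μ₀ x y = μ₀ y x)
    (φ : ℕ → (A →ₗ[K] A →ₗ[K] A))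
    (h0 : φ 0 = μ₀)
    (hdef : ∀ k : ℕ, ∀ x y z : A,
      ∑ p ∈ Finset.HasAntidiagonal.antidiagonal k,
        (φ p.1 x (φ p.2 y z) - φ p.1 (φ p.2 x y) z) = 0) :
    (∀ x y z : A,
      skewPart (φ 1) x (skewPart (φ 1) y z) + skewPart (φ 1) y (skewPart (φ 1) z x) +
        skewPart (φ 1) z (skewPart (φ 1) x y) = 0) ∧
    (∀ x y z : A,
      skewPart (φ 1) (μ₀ x y) z =
        μ₀ x (skewPart (φ 1) y z) + μ₀ y (skewPart (φ 1) x z)) :=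
  ⟨skewPart_jacobi_of_associator_add_hochschildCoboundary_eq_zero hcomm (φ 2)
      (associator_add_hochschildCoboundary_eq_zero_of_deformation h0 (hdef 2)),
    skewPart_leibniz_of_hochschildCoboundary_eq_zero hcomm
      (hochschildCoboundary_eq_zero_of_deformation h0 (hdef 1))⟩

/-- If `(φ_i)` is an associative formal deformation of a commutative associative
multiplication `μ₀`, then the skew-symmetric part `ψ₁` of `φ₁` satisfies the Jacobi
identity and the Leibniz identity with `μ₀`: `(A, μ₀, ψ₁)` is a Poisson algebra. -/
theorem deformation_gives_poisson {K A : Type*} [Field K] [CharZero K]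
    [AddCommGroup A] [Module K A]
    (μ₀ : A →ₗ[K] A →ₗ[K] A)
    (hcomm : ∀ x y : A, μ₀ x y = μ₀ y x)
    (hassoc : ∀ x y z : A, μ₀ x (μ₀ y z) = μ₀ (μ₀ x y) z)
    (φ : ℕ → (A →ₗ[K] A →ₗ[K] A))
    (h0 : φ 0 = μ₀)
    (hdef : ∀ k : ℕ, ∀ x y z : A,
      ∑ p ∈ Finset.HasAntidiagonal.antidiagonal k,
        (φ p.1 x (φ p.2 y z) - φ p.1 (φ p.2 x y) z) = 0) :
    (∀ x y z : A,
      skewPart (φ 1) x (skewPart (φ 1) y z) + skewPart (φ 1) y (skewPart (φ 1) z x) +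
        skewPart (φ 1) z (skewPart (φ 1) x y) = 0) ∧
    (∀ x y z : A,
      skewPart (φ 1) (μ₀ x y) z =
        μ₀ x (skewPart (φ 1) y z) + μ₀ y (skewPart (φ 1) x z)) :=
  deformation_gives_poisson_general μ₀ hcomm φ h0 hdef
end

section
/- Let μ₀ be a commutative and associative multiplication on A. For bilinear maps φ,φ' on A set D(φ,φ')(x,y,z) = φ(x,φ'(y,z)) − φ(φ'(x,y),z). Let (φ_i)_{i≥0} be a weakly associative formal deformation of μ₀, i.e. φ₀ = μ₀ and for every k ≥ 0 and all x,y,z ∈ A: ∑_{i+j=k} [D(φ_i,φ_j)(x,y,z) − D(φ_i,φ_j)(y,x,z) + D(φ_i,φ_j)(y,z,x)] = 0. Then the skew-symmetric part ψ₁ of φ₁ satisfies the Jacobi identity and the Leibniz identity ψ₁(μ₀(x,y),z) = μ₀(x,ψ₁(y,z)) + μ₀(y,ψ₁(x,z)) for all x,y,z ∈ A; that is, (A,μ₀,ψ₁) is a Poisson algebra. -/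
open Finset

/-- `D(φ,φ')(x,y,z) = φ(x,φ'(y,z)) − φ(φ'(x,y),z)`. -/
def defD {K A : Type*} [Field K] [AddCommGroup A] [Module K A]
    (φ φ' : A →ₗ[K] A →ₗ[K] A) (x y z : A) : A :=
  φ x (φ' y z) - φ (φ' x y) z

/-
Write `W(φ, φ')(x,y,z) = D(φ,φ')(x,y,z) − D(φ,φ')(y,x,z) + D(φ,φ')(y,z,x)`, so that the
order-`k` weak associativity equation reads `∑_{i+j=k} W(φ_i, φ_j) = 0`. Order 1 says that
`W(μ₀, φ₁) + W(φ₁, μ₀)` vanishes, and for commutative `μ₀` this expression is, up to sign and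
a permutation of the arguments, the Leibniz defect of `ψ₁`. At order 2, antisymmetrising in the
last two arguments kills the `φ₂`-terms `W(μ₀, φ₂) + W(φ₂, μ₀)` (again by commutativity of `μ₀`),
while the antisymmetrisation of `W(φ₁, φ₁)` is exactly the Jacobiator of `ψ₁`.
-/

section WeakAssociator

variable {K A : Type*} [Field K] [AddCommGroup A] [Module K A]

def weakAssociator (φ φ' : A →ₗ[K] A →ₗ[K] A) (x y z : A) : A :=
  defD φ φ' x y z - defD φ φ' y x z + defD φ φ' y z x

theorem sum_antidiagonal_one_weakAssociator (φ : ℕ → A →ₗ[K] A →ₗ[K] A) (x y z : A) :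
    ∑ p ∈ antidiagonal 1, weakAssociator (φ p.1) (φ p.2) x y z =
      weakAssociator (φ 0) (φ 1) x y z + weakAssociator (φ 1) (φ 0) x y z := by
  simp [Nat.sum_antidiagonal_eq_sum_range_succ_mk, sum_range_succ]

theorem sum_antidiagonal_two_weakAssociator (φ : ℕ → A →ₗ[K] A →ₗ[K] A) (x y z : A) :
    ∑ p ∈ antidiagonal 2, weakAssociator (φ p.1) (φ p.2) x y z =
      weakAssociator (φ 0) (φ 2) x y z + weakAssociator (φ 1) (φ 1) x y z +
        weakAssociator (φ 2) (φ 0) x y z := by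
  simp [Nat.sum_antidiagonal_eq_sum_range_succ_mk, sum_range_succ]

theorem jacobiator_skewPart_eq_weakAssociator_sub (φ : A →ₗ[K] A →ₗ[K] A) (x y z : A) :
    skewPart φ x (skewPart φ y z) + skewPart φ y (skewPart φ z x) +
        skewPart φ z (skewPart φ x y) =
      weakAssociator φ φ x y z - weakAssociator φ φ x z y := by
  simp only [weakAssociator, defD, skewPart, map_sub, LinearMap.sub_apply]
  abel

variable {μ : A →ₗ[K] A →ₗ[K] A}

theorem weakAssociator_add_antisymm_eq_zero (hμ : ∀ x y, μ x y = μ y x)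
    (φ : A →ₗ[K] A →ₗ[K] A) (x y z : A) :
    weakAssociator μ φ x y z + weakAssociator φ μ x y z -
        (weakAssociator μ φ x z y + weakAssociator φ μ x z y) = 0 := by
  simp only [weakAssociator, defD]
  rw [hμ x (φ y z), hμ z (φ x y), hμ y (φ x z), hμ z (φ y x), hμ y (φ z x), hμ x (φ z y),
    hμ y z, hμ x y, hμ x z]
  abel

theorem skewPart_leibniz_defect_eq (hμ : ∀ x y, μ x y = μ y x)
    (φ : A →ₗ[K] A →ₗ[K] A) (x y z : A) :
    skewPart φ (μ x y) z - (μ x (skewPart φ y z) + μ y (skewPart φ x z)) =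
      -(weakAssociator μ φ z x y + weakAssociator φ μ z x y) := by
  simp only [weakAssociator, defD, skewPart, map_sub]
  rw [hμ y (φ x z), hμ y (φ z x), hμ z (φ x y), hμ z x, hμ y z]
  abel

end WeakAssociator

theorem weakly_associative_deformation_gives_poisson_general {K A : Type*} [Field K]
    [AddCommGroup A] [Module K A]
    (μ₀ : A →ₗ[K] A →ₗ[K] A)
    (hcomm : ∀ x y : A, μ₀ x y = μ₀ y x)
    (φ : ℕ → (A →ₗ[K] A →ₗ[K] A))
    (h0 : φ 0 = μ₀)
    (hdef : ∀ k : ℕ, ∀ x y z : A,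
      ∑ p ∈ Finset.HasAntidiagonal.antidiagonal k,
        (defD (φ p.1) (φ p.2) x y z - defD (φ p.1) (φ p.2) y x z +
          defD (φ p.1) (φ p.2) y z x) = 0) :
    (∀ x y z : A,
      skewPart (φ 1) x (skewPart (φ 1) y z) + skewPart (φ 1) y (skewPart (φ 1) z x) +
        skewPart (φ 1) z (skewPart (φ 1) x y) = 0) ∧
    (∀ x y z : A,
      skewPart (φ 1) (μ₀ x y) z =
        μ₀ x (skewPart (φ 1) y z) + μ₀ y (skewPart (φ 1) x z)) := by
  have order_one (x y z : A) :
      weakAssociator μ₀ (φ 1) x y z + weakAssociator (φ 1) μ₀ x y z = 0 := by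
    rw [← h0, ← sum_antidiagonal_one_weakAssociator]
    exact hdef 1 x y z
  have order_two (x y z : A) :
      weakAssociator μ₀ (φ 2) x y z + weakAssociator (φ 1) (φ 1) x y z +
        weakAssociator (φ 2) μ₀ x y z = 0 := by
    rw [← h0, ← sum_antidiagonal_two_weakAssociator]
    exact hdef 2 x y z
  refine ⟨fun x y z => ?_, fun x y z => ?_⟩
  · rw [jacobiator_skewPart_eq_weakAssociator_sub]
    have := weakAssociator_add_antisymm_eq_zero hcomm (φ 2) x y z
    linear_combination (norm := abel) order_two x y z - order_two x z y - this
  · rw [← sub_eq_zero, skewPart_leibniz_defect_eq hcomm, order_one, neg_zero]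

/-- If `(φ_i)` is a weakly associative formal deformation of a commutative associative
multiplication `μ₀`, then the skew-symmetric part `ψ₁` of `φ₁` satisfies the Jacobi
identity and the Leibniz identity with `μ₀`: `(A, μ₀, ψ₁)` is a Poisson algebra. -/
theorem weakly_associative_deformation_gives_poisson {K A : Type*} [Field K] [CharZero K]
    [AddCommGroup A] [Module K A]
    (μ₀ : A →ₗ[K] A →ₗ[K] A)
    (hcomm : ∀ x y : A, μ₀ x y = μ₀ y x)
    (hassoc : ∀ x y z : A, μ₀ x (μ₀ y z) = μ₀ (μ₀ x y) z)
    (φ : ℕ → (A →ₗ[K] A →ₗ[K] A))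
    (h0 : φ 0 = μ₀)
    (hdef : ∀ k : ℕ, ∀ x y z : A,
      ∑ p ∈ Finset.HasAntidiagonal.antidiagonal k,
        (defD (φ p.1) (φ p.2) x y z - defD (φ p.1) (φ p.2) y x z +
          defD (φ p.1) (φ p.2) y z x) = 0) :
    (∀ x y z : A,
      skewPart (φ 1) x (skewPart (φ 1) y z) + skewPart (φ 1) y (skewPart (φ 1) z x) +
        skewPart (φ 1) z (skewPart (φ 1) x y) = 0) ∧
    (∀ x y z : A,
      skewPart (φ 1) (μ₀ x y) z =
        μ₀ x (skewPart (φ 1) y z) + μ₀ y (skewPart (φ 1) x z)) :=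
  weakly_associative_deformation_gives_poisson_general μ₀ hcomm φ h0 hdef
end

section
/- Let μ₀ be a commutative multiplication on A. For bilinear maps φ,φ' on A set D(φ,φ')(x,y,z) = φ(x,φ'(y,z)) − φ(φ'(x,y),z). Let (φ_i)_{i≥0} be a Lie-admissible (V_Lad-) formal deformation of μ₀, i.e. φ₀ = μ₀ and for every k ≥ 0 and all x₁,x₂,x₃ ∈ A: ∑_{i+j=k} ∑_{σ∈S₃} sign(σ)·D(φ_i,φ_j)(x_{σ(1)},x_{σ(2)},x_{σ(3)}) = 0. Then the skew-symmetric part ψ₁ of φ₁ satisfies the Jacobi identity, i.e. φ₁ is a Lie-admissible multiplication on A. -/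
/-!
Compare coefficients of `t²` in the deformation equation. The `(1,1)` term is the alternating
sum of `D(φ₁,φ₁)`, which is exactly the Jacobiator of `ψ₁`. The `(0,2)` and `(2,0)` terms cancel by
commutativity of `μ₀`: after alternation, `φ₂(x, μ₀(y,z))` and `φ₂(μ₀(x,y), z)` vanish because they
are symmetric under a transposition, while `μ₀(x, φ₂(y,z))` and `μ₀(φ₂(x,y), z)` differ by an even
(cyclic) permutation of the arguments.
-/

open Equiv Finset

section Alternatization

variable {ι A M : Type*} [Fintype ι] [DecidableEq ι] [AddCommGroup M]

def alternatization (g : (ι → A) → M) (v : ι → A) : M :=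
  ∑ σ : Perm ι, Perm.sign σ • g (v ∘ σ)

theorem alternatization_add (g h : (ι → A) → M) (v : ι → A) :
    alternatization (fun w => g w + h w) v = alternatization g v + alternatization h v := by
  simp only [alternatization, smul_add, sum_add_distrib]

theorem alternatization_sub (g h : (ι → A) → M) (v : ι → A) :
    alternatization (fun w => g w - h w) v = alternatization g v - alternatization h v := by
  simp only [alternatization, smul_sub, sum_sub_distrib]

theorem alternatization_comp_perm (g : (ι → A) → M) (τ : Perm ι) (v : ι → A) :
    alternatization (fun w => g (w ∘ τ)) v = Perm.sign τ • alternatization g v := by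
  rw [alternatization, alternatization, smul_sum]
  refine Fintype.sum_equiv (Equiv.mulRight τ) _ _ fun σ => ?_
  rw [smul_smul, coe_mulRight, Perm.sign_mul, mul_left_comm, Int.units_mul_self, mul_one]
  rfl

theorem alternatization_eq_zero_of_comp_swap (g : (ι → A) → M) {i j : ι} (hij : i ≠ j)
    (hg : ∀ w, g (w ∘ swap i j) = g w) (v : ι → A) : alternatization g v = 0 := by
  refine sum_ninvolution (· * swap i j) (fun σ => ?_) (fun σ _ => ?_) (fun _ => mem_univ _)
    fun σ => by simp [mul_assoc]
  · rw [Perm.sign_mul, Perm.sign_swap hij, Perm.coe_mul, ← Function.comp_assoc, hg]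
    simp
  · simpa using hij

end Alternatization

theorem alternatization_fin_three {A M : Type*} [AddCommGroup M] (g : (Fin 3 → A) → M)
    (x y z : A) :
    alternatization g ![x, y, z] =
      g ![x, y, z] - g ![y, x, z] - g ![z, y, x] - g ![x, z, y] + g ![y, z, x] + g ![z, x, y] := by
  have hcomp (σ : Perm (Fin 3)) :
      ![x, y, z] ∘ σ = ![![x, y, z] (σ 0), ![x, y, z] (σ 1), ![x, y, z] (σ 2)] := by
    funext i; fin_cases i <;> rfl
  have huniv : (univ : Finset (Perm (Fin 3))) =
      {1, swap 0 1, swap 0 2, swap 1 2, swap 0 1 * swap 1 2, swap 1 2 * swap 0 1} := by decide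
  rw [alternatization, huniv, sum_insert (by decide), sum_insert (by decide),
    sum_insert (by decide), sum_insert (by decide), sum_insert (by decide), sum_singleton]
  simp [hcomp, -Perm.coe_mul, Perm.mul_apply, swap_apply_of_ne_of_ne, Units.smul_def,
    sub_eq_add_neg, add_assoc]

section Deformation

variable {K A : Type*} [Field K] [AddCommGroup A] [Module K A]

theorem alternatization_defD_add_defD_of_comm {μ : A →ₗ[K] A →ₗ[K] A}
    (hμ : ∀ x y, μ x y = μ y x) (ψ : A →ₗ[K] A →ₗ[K] A) (v : Fin 3 → A) :
    alternatization (fun w => defD μ ψ (w 0) (w 1) (w 2)) v +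
      alternatization (fun w => defD ψ μ (w 0) (w 1) (w 2)) v = 0 := by
  set g : (Fin 3 → A) → A := fun w => μ (ψ (w 0) (w 1)) (w 2)
  have hsplit :
      (fun w : Fin 3 → A => defD μ ψ (w 0) (w 1) (w 2) + defD ψ μ (w 0) (w 1) (w 2)) =
        fun w => (g (w ∘ finRotate 3) - g w) +
          (ψ (w 0) (μ (w 1) (w 2)) - ψ (μ (w 0) (w 1)) (w 2)) := by
    funext w
    simp [g, defD, hμ (ψ _ _)]
  rw [← alternatization_add, hsplit, alternatization_add, alternatization_sub, alternatization_sub,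
    alternatization_comp_perm, sign_finRotate,
    alternatization_eq_zero_of_comp_swap (fun w => ψ (w 0) (μ (w 1) (w 2)))
      (by decide : (1 : Fin 3) ≠ 2) (fun w => by simp [hμ (w 2), swap_apply_of_ne_of_ne]),
    alternatization_eq_zero_of_comp_swap (fun w => ψ (μ (w 0) (w 1)) (w 2))
      (by decide : (0 : Fin 3) ≠ 1) (fun w => by simp [hμ (w 1), swap_apply_of_ne_of_ne])]
  simp

theorem alternatization_defD_self (φ : A →ₗ[K] A →ₗ[K] A) (x y z : A) :
    alternatization (fun w => defD φ φ (w 0) (w 1) (w 2)) ![x, y, z] =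
      skewPart φ x (skewPart φ y z) + skewPart φ y (skewPart φ z x) +
        skewPart φ z (skewPart φ x y) := by
  simp only [alternatization_fin_three, defD, skewPart, map_sub, LinearMap.sub_apply,
    Matrix.cons_val_zero, Matrix.cons_val_one, Matrix.cons_val_two, Matrix.head_cons,
    Matrix.tail_cons]
  abel

end Deformation

theorem vlad_deformation_linear_term_lie_admissible_general {K A : Type*} [Field K]
    [AddCommGroup A] [Module K A]
    (μ₀ : A →ₗ[K] A →ₗ[K] A)
    (hcomm : ∀ x y : A, μ₀ x y = μ₀ y x)
    (φ : ℕ → (A →ₗ[K] A →ₗ[K] A))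
    (h0 : φ 0 = μ₀)
    (hdef : ∀ k : ℕ, ∀ x : Fin 3 → A,
      ∑ p ∈ Finset.HasAntidiagonal.antidiagonal k, ∑ σ : Perm (Fin 3), ((Perm.sign σ : ℤ) : K) •
        defD (φ p.1) (φ p.2) (x (σ 0)) (x (σ 1)) (x (σ 2)) = 0) :
    ∀ x y z : A,
      skewPart (φ 1) x (skewPart (φ 1) y z) + skewPart (φ 1) y (skewPart (φ 1) z x) +
        skewPart (φ 1) z (skewPart (φ 1) x y) = 0 := by
  intro x y z
  have h2 := hdef 2 ![x, y, z]
  simp only [Int.cast_smul_eq_zsmul, ← Units.smul_def] at h2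
  change ∑ p ∈ antidiagonal 2,
    alternatization (fun w => defD (φ p.1) (φ p.2) (w 0) (w 1) (w 2)) ![x, y, z] = 0 at h2
  rw [Nat.sum_antidiagonal_eq_sum_range_succ_mk] at h2
  simp only [sum_range_succ, sum_range_zero, zero_add, h0] at h2
  rw [add_right_comm, alternatization_defD_add_defD_of_comm hcomm, zero_add,
    alternatization_defD_self] at h2
  exact h2

/-- If `(φ_i)` is a Lie-admissible (`V_Lad`-) formal deformation of a commutative
multiplication `μ₀`, then the skew-symmetric part `ψ₁` of `φ₁` satisfies the Jacobi
identity, i.e. `φ₁` is Lie-admissible. -/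
theorem vlad_deformation_linear_term_lie_admissible {K A : Type*} [Field K] [CharZero K]
    [AddCommGroup A] [Module K A]
    (μ₀ : A →ₗ[K] A →ₗ[K] A)
    (hcomm : ∀ x y : A, μ₀ x y = μ₀ y x)
    (φ : ℕ → (A →ₗ[K] A →ₗ[K] A))
    (h0 : φ 0 = μ₀)
    (hdef : ∀ k : ℕ, ∀ x : Fin 3 → A,
      ∑ p ∈ Finset.HasAntidiagonal.antidiagonal k, ∑ σ : Perm (Fin 3), ((Perm.sign σ : ℤ) : K) •
        defD (φ p.1) (φ p.2) (x (σ 0)) (x (σ 1)) (x (σ 2)) = 0) :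
    ∀ x y z : A,
      skewPart (φ 1) x (skewPart (φ 1) y z) + skewPart (φ 1) y (skewPart (φ 1) z x) +
        skewPart (φ 1) z (skewPart (φ 1) x y) = 0 :=
  vlad_deformation_linear_term_lie_admissible_general μ₀ hcomm φ h0 hdef
end

section
/- Let μ₀ be a commutative multiplication on A. For bilinear maps φ,φ' on A set D(φ,φ')(x,y,z) = φ(x,φ'(y,z)) − φ(φ'(x,y),z). Let (φ_i)_{i≥0} be a 3-power-associative (V_3Pa-) formal deformation of μ₀, i.e. φ₀ = μ₀ and for every k ≥ 0 and all x₁,x₂,x₃ ∈ A: ∑_{i+j=k} ∑_{σ∈S₃} D(φ_i,φ_j)(x_{σ(1)},x_{σ(2)},x_{σ(3)}) = 0. Then the skew-symmetric part ψ₁ of φ₁ satisfies ψ₁(μ₀(x,y),z) + ψ₁(μ₀(y,z),x) + ψ₁(μ₀(z,x),y) = 0 for all x,y,z ∈ A. -/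
open Equiv Finset

/-!
The order-one part of the deformation equation reads
`∑_σ (D(μ₀,φ₁) + D(φ₁,μ₀))(x_σ) = 0`. Summing over all of `S₃` makes the sum invariant under
cyclically rotating the arguments, so by commutativity of `μ₀` the `D(μ₀,φ₁)` terms cancel and
the `D(φ₁,μ₀)` terms collapse to `-∑_σ ψ₁(μ₀(x_σ(1),x_σ(2)),x_σ(3))`. Commutativity of `μ₀`
again pairs the six terms of this last sum into twice the cyclic sum, and `2` is invertible.
-/

section PermFinThree

variable {α M : Type*} [AddCommMonoid M]

lemma sum_perm_fin_three_rotate (f : α → α → α → M) (x : Fin 3 → α) :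
    ∑ σ : Perm (Fin 3), f (x (σ 0)) (x (σ 1)) (x (σ 2)) =
      ∑ σ : Perm (Fin 3), f (x (σ 2)) (x (σ 0)) (x (σ 1)) :=
  Fintype.sum_equiv (Equiv.mulRight (finRotate 3)) _ _ fun _ => rfl

lemma sum_perm_fin_three (f : α → α → α → M) (x : Fin 3 → α) :
    ∑ σ : Perm (Fin 3), f (x (σ 0)) (x (σ 1)) (x (σ 2)) =
      f (x 0) (x 1) (x 2) + f (x 1) (x 0) (x 2) + f (x 2) (x 1) (x 0) +
        f (x 0) (x 2) (x 1) + f (x 1) (x 2) (x 0) + f (x 2) (x 0) (x 1) := by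
  have huniv : (univ : Finset (Perm (Fin 3))) =
      {1, swap 0 1, swap 0 2, swap 1 2, finRotate 3, finRotate 3 * finRotate 3} := by
    decide
  rw [huniv, sum_insert (by decide), sum_insert (by decide), sum_insert (by decide),
    sum_insert (by decide), sum_insert (by decide), sum_singleton]
  simp only [add_assoc]
  rfl

end PermFinThree

section Bilinear

variable {K A : Type*} [Field K] [AddCommGroup A] [Module K A]
  {μ : A →ₗ[K] A →ₗ[K] A} (hμ : ∀ x y : A, μ x y = μ y x) (φ : A →ₗ[K] A →ₗ[K] A)
  (x : Fin 3 → A)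
include hμ

lemma sum_perm_defD_eq_zero_of_comm :
    ∑ σ : Perm (Fin 3), defD μ φ (x (σ 0)) (x (σ 1)) (x (σ 2)) = 0 := by
  simp only [defD, sum_sub_distrib, sub_eq_zero]
  rw [sum_perm_fin_three_rotate (fun a b c => μ a (φ b c))]
  simp only [hμ _ (φ _ _)]

omit hμ in
lemma sum_perm_defD_eq_neg_sum_skewPart :
    ∑ σ : Perm (Fin 3), defD φ μ (x (σ 0)) (x (σ 1)) (x (σ 2)) =
      -∑ σ : Perm (Fin 3), skewPart φ (μ (x (σ 0)) (x (σ 1))) (x (σ 2)) := by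
  simp only [defD, skewPart, sum_sub_distrib, neg_sub]
  rw [sum_perm_fin_three_rotate (fun a b c => φ a (μ b c))]

lemma sum_perm_skewPart_eq_two_smul :
    ∑ σ : Perm (Fin 3), skewPart φ (μ (x (σ 0)) (x (σ 1))) (x (σ 2)) =
      (2 : K) • (skewPart φ (μ (x 0) (x 1)) (x 2) + skewPart φ (μ (x 1) (x 2)) (x 0) +
        skewPart φ (μ (x 2) (x 0)) (x 1)) := by
  rw [sum_perm_fin_three (fun a b c => skewPart φ (μ a b) c), two_smul,
    hμ (x 1) (x 0), hμ (x 2) (x 1), hμ (x 0) (x 2)]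
  abel

end Bilinear

/-- If `(φ_i)` is a `3`-power-associative (`V_3Pa`-) formal deformation of a commutative
multiplication `μ₀`, then the skew-symmetric part `ψ₁` of `φ₁` satisfies
`ψ₁(μ₀(x,y),z) + ψ₁(μ₀(y,z),x) + ψ₁(μ₀(z,x),y) = 0`. -/
theorem v3pa_deformation_skew_cyclic {K A : Type*} [Field K] [CharZero K]
    [AddCommGroup A] [Module K A]
    (μ₀ : A →ₗ[K] A →ₗ[K] A)
    (hcomm : ∀ x y : A, μ₀ x y = μ₀ y x)
    (φ : ℕ → (A →ₗ[K] A →ₗ[K] A))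
    (h0 : φ 0 = μ₀)
    (hdef : ∀ k : ℕ, ∀ x : Fin 3 → A,
      ∑ p ∈ Finset.HasAntidiagonal.antidiagonal k, ∑ σ : Perm (Fin 3),
        defD (φ p.1) (φ p.2) (x (σ 0)) (x (σ 1)) (x (σ 2)) = 0) :
    ∀ x y z : A,
      skewPart (φ 1) (μ₀ x y) z + skewPart (φ 1) (μ₀ y z) x +
        skewPart (φ 1) (μ₀ z x) y = 0 := by
  intro x y z
  have horder_one := hdef 1 ![x, y, z]
  simp only [Nat.sum_antidiagonal_succ, Nat.antidiagonal_zero, sum_singleton, zero_add,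
    h0] at horder_one
  rw [sum_perm_defD_eq_zero_of_comm hcomm, sum_perm_defD_eq_neg_sum_skewPart,
    sum_perm_skewPart_eq_two_smul hcomm, zero_add, neg_eq_zero,
    smul_eq_zero_iff_right two_ne_zero] at horder_one
  simpa using horder_one
end

section
/- Let μ₀ be a commutative multiplication on A. For bilinear maps φ,φ' on A set D(φ,φ')(x,y,z) = φ(x,φ'(y,z)) − φ(φ'(x,y),z). Let (φ_i)_{i≥0} be a (Id+c+c²)-formal deformation of μ₀, i.e. φ₀ = μ₀ and for every k ≥ 0 and all x,y,z ∈ A: ∑_{i+j=k} [D(φ_i,φ_j)(x,y,z) + D(φ_i,φ_j)(y,z,x) + D(φ_i,φ_j)(z,x,y)] = 0. Then the skew-symmetric part ψ₁ of φ₁ satisfies the Jacobi identity and ψ₁(μ₀(x,y),z) + ψ₁(μ₀(y,z),x) + ψ₁(μ₀(z,x),y) = 0 for all x,y,z ∈ A; that is, (A,μ₀,ψ₁) is a weakly Poisson algebra. -/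
open Finset

/-!
Write the deformation equation of order `k` as `∑_{i+j=k} (Id+c+c²) D(φ_i,φ_j) = 0`, with `c`
the cyclic permutation of the arguments. For a commutative `μ₀`, the cyclic sum of `D(μ₀,φ)`
vanishes for every `φ`, while that of `D(φ,μ₀)` is minus the cyclic sum of `ψ(μ₀(x,y),z)`, `ψ`
the skew part of `φ`. Order one is therefore the cyclic identity for `ψ₁`. At order two, the
cyclic sum of `D(φ₂,μ₀)` is symmetric under `x ↔ y`, hence so is that of `D(φ₁,φ₁)`;
antisymmetrizing the latter in `x, y` gives the Jacobiator of `ψ₁`, which therefore vanishes.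
-/

section CyclicD

variable {K A : Type*} [Field K] [AddCommGroup A] [Module K A]

def cyclicD (φ φ' : A →ₗ[K] A →ₗ[K] A) (x y z : A) : A :=
  defD φ φ' x y z + defD φ φ' y z x + defD φ φ' z x y

theorem cyclicD_of_comm_left {μ : A →ₗ[K] A →ₗ[K] A} (hμ : ∀ x y, μ x y = μ y x)
    (φ : A →ₗ[K] A →ₗ[K] A) (x y z : A) : cyclicD μ φ x y z = 0 := by
  rw [cyclicD, defD, defD, defD, hμ (φ x y) z, hμ (φ y z) x, hμ (φ z x) y]
  abel

theorem cyclicD_eq_neg_skewPart (φ μ : A →ₗ[K] A →ₗ[K] A) (x y z : A) :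
    cyclicD φ μ x y z =
      -(skewPart φ (μ x y) z + skewPart φ (μ y z) x + skewPart φ (μ z x) y) := by
  simp only [cyclicD, defD, skewPart]
  abel

theorem cyclicD_swap_of_comm_right {μ : A →ₗ[K] A →ₗ[K] A} (hμ : ∀ x y, μ x y = μ y x)
    (φ : A →ₗ[K] A →ₗ[K] A) (x y z : A) : cyclicD φ μ x y z = cyclicD φ μ y x z := by
  rw [cyclicD_eq_neg_skewPart, cyclicD_eq_neg_skewPart, hμ y x, hμ x z, hμ z y]
  abel

theorem jacobi_skewPart_eq_cyclicD_sub (φ : A →ₗ[K] A →ₗ[K] A) (x y z : A) :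
    skewPart φ x (skewPart φ y z) + skewPart φ y (skewPart φ z x) +
        skewPart φ z (skewPart φ x y) =
      cyclicD φ φ x y z - cyclicD φ φ y x z := by
  simp only [cyclicD, defD, skewPart, map_sub, LinearMap.sub_apply]
  abel

end CyclicD

theorem cyclic_deformation_gives_weakly_poisson_general {K A : Type*} [Field K]
    [AddCommGroup A] [Module K A]
    (μ₀ : A →ₗ[K] A →ₗ[K] A)
    (hcomm : ∀ x y : A, μ₀ x y = μ₀ y x)
    (φ : ℕ → (A →ₗ[K] A →ₗ[K] A))
    (h0 : φ 0 = μ₀)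
    (hdef : ∀ k : ℕ, ∀ x y z : A,
      ∑ p ∈ Finset.HasAntidiagonal.antidiagonal k,
        (defD (φ p.1) (φ p.2) x y z + defD (φ p.1) (φ p.2) y z x +
          defD (φ p.1) (φ p.2) z x y) = 0) :
    (∀ x y z : A,
      skewPart (φ 1) x (skewPart (φ 1) y z) + skewPart (φ 1) y (skewPart (φ 1) z x) +
        skewPart (φ 1) z (skewPart (φ 1) x y) = 0) ∧
    (∀ x y z : A,
      skewPart (φ 1) (μ₀ x y) z + skewPart (φ 1) (μ₀ y z) x +
        skewPart (φ 1) (μ₀ z x) y = 0) := by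
  have order_one (x y z : A) : cyclicD (φ 1) μ₀ x y z = 0 := by
    have h := hdef 1 x y z
    simp only [Nat.sum_antidiagonal_succ, Nat.antidiagonal_zero, sum_singleton, h0] at h
    rwa [← cyclicD, ← cyclicD, cyclicD_of_comm_left hcomm, zero_add] at h
  have order_two (x y z : A) : cyclicD (φ 1) (φ 1) x y z = -cyclicD (φ 2) μ₀ x y z := by
    have h := hdef 2 x y z
    simp only [Nat.sum_antidiagonal_succ, Nat.antidiagonal_zero, sum_singleton, h0] at h
    rw [← cyclicD, ← cyclicD, ← cyclicD, cyclicD_of_comm_left hcomm, zero_add] at h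
    exact eq_neg_of_add_eq_zero_left h
  refine ⟨fun x y z => ?_, fun x y z => ?_⟩
  · rw [jacobi_skewPart_eq_cyclicD_sub, order_two, order_two,
      cyclicD_swap_of_comm_right hcomm, sub_self]
  · simpa only [cyclicD_eq_neg_skewPart, neg_eq_zero] using order_one x y z

/-- If `(φ_i)` is an `(Id + c + c²)`-formal deformation of a commutative multiplication
`μ₀`, then the skew-symmetric part `ψ₁` of `φ₁` satisfies the Jacobi identity and the
cyclic identity `ψ₁(μ₀(x,y),z) + ψ₁(μ₀(y,z),x) + ψ₁(μ₀(z,x),y) = 0`, i.e.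
`(A, μ₀, ψ₁)` is a weakly Poisson algebra. -/
theorem cyclic_deformation_gives_weakly_poisson {K A : Type*} [Field K] [CharZero K]
    [AddCommGroup A] [Module K A]
    (μ₀ : A →ₗ[K] A →ₗ[K] A)
    (hcomm : ∀ x y : A, μ₀ x y = μ₀ y x)
    (φ : ℕ → (A →ₗ[K] A →ₗ[K] A))
    (h0 : φ 0 = μ₀)
    (hdef : ∀ k : ℕ, ∀ x y z : A,
      ∑ p ∈ Finset.HasAntidiagonal.antidiagonal k,
        (defD (φ p.1) (φ p.2) x y z + defD (φ p.1) (φ p.2) y z x +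
          defD (φ p.1) (φ p.2) z x y) = 0) :
    (∀ x y z : A,
      skewPart (φ 1) x (skewPart (φ 1) y z) + skewPart (φ 1) y (skewPart (φ 1) z x) +
        skewPart (φ 1) z (skewPart (φ 1) x y) = 0) ∧
    (∀ x y z : A,
      skewPart (φ 1) (μ₀ x y) z + skewPart (φ 1) (μ₀ y z) x +
        skewPart (φ 1) (μ₀ z x) y = 0) :=
  cyclic_deformation_gives_weakly_poisson_general μ₀ hcomm φ h0 hdef
end

section
/- Let μ₀ be a commutative multiplication on A satisfying the Leibniz identity μ₀(x,μ₀(y,z)) = μ₀(μ₀(x,y),z) + μ₀(y,μ₀(x,z)) for all x,y,z (a commutative Leibniz algebra). Let (φ_i)_{i≥0} be a Leibniz formal deformation of μ₀, i.e. φ₀ = μ₀ and for every k ≥ 0 and all x,y,z ∈ A: ∑_{i+j=k} [φ_i(x,φ_j(y,z)) − φ_i(φ_j(x,y),z) − φ_i(y,φ_j(x,z))] = 0. Then the skew-symmetric part ψ₁ of φ₁ satisfies μ₀(x,ψ₁(y,z)) − ψ₁(y,μ₀(x,z)) − ψ₁(μ₀(x,y),z) = 0 for all x,y,z ∈ A;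 that is, (A,μ₀,ψ₁) is a pseudo-Poisson structure. -/
open Finset

/-! A Leibniz formal deformation `μ₀ + t φ₁ + t² φ₂ + ⋯` gives, at order `t`, the identity
`L(μ₀, φ₁) + L(φ₁, μ₀) = 0` for the Leibnizator `L` below. Evaluating it at `(x, y, z)` and
`(x, z, y)` and subtracting, commutativity of `μ₀` turns the difference into exactly the
pseudo-Poisson identity for `ψ₁ = φ₁ - φ₁ ∘ swap`. -/

section Leibnizator

variable {R A : Type*} [CommRing R] [AddCommGroup A] [Module R A]

def leibnizator (φ ψ : A →ₗ[R] A →ₗ[R] A) (x y z : A) : A :=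
  φ x (ψ y z) - φ (ψ x y) z - φ y (ψ x z)

theorem leibnizator_first_order {φ : ℕ → A →ₗ[R] A →ₗ[R] A}
    (hdef : ∀ x y z : A,
      ∑ p ∈ antidiagonal 1, leibnizator (φ p.1) (φ p.2) x y z = 0) (x y z : A) :
    leibnizator (φ 0) (φ 1) x y z + leibnizator (φ 1) (φ 0) x y z = 0 := by
  simpa [Nat.sum_antidiagonal_succ] using hdef x y z

end Leibnizator

theorem skewPart_pseudoPoisson {K A : Type*} [Field K] [AddCommGroup A] [Module K A]
    {μ φ : A →ₗ[K] A →ₗ[K] A} (hcomm : ∀ x y : A, μ x y = μ y x)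
    (hcocycle : ∀ x y z : A, leibnizator μ φ x y z + leibnizator φ μ x y z = 0)
    (x y z : A) :
    μ x (skewPart φ y z) - skewPart φ y (μ x z) - skewPart φ (μ x y) z = 0 := by
  have hxyz := hcocycle x y z
  have hxzy := hcocycle x z y
  simp only [leibnizator] at hxyz hxzy
  rw [hcomm (φ x z) y, hcomm z (φ x y), hcomm z y] at hxzy
  simp only [skewPart, map_sub]
  rw [← sub_eq_zero_of_eq (hxyz.trans hxzy.symm)]
  abel

theorem leibniz_deformation_pseudo_poisson_general {K A : Type*} [Field K]
    [AddCommGroup A] [Module K A]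
    (μ₀ : A →ₗ[K] A →ₗ[K] A)
    (hcomm : ∀ x y : A, μ₀ x y = μ₀ y x)
    (φ : ℕ → (A →ₗ[K] A →ₗ[K] A))
    (h0 : φ 0 = μ₀)
    (hdef : ∀ k : ℕ, ∀ x y z : A,
      ∑ p ∈ Finset.HasAntidiagonal.antidiagonal k,
        (φ p.1 x (φ p.2 y z) - φ p.1 (φ p.2 x y) z - φ p.1 y (φ p.2 x z)) = 0) :
    ∀ x y z : A,
      μ₀ x (skewPart (φ 1) y z) - skewPart (φ 1) y (μ₀ x z) -
        skewPart (φ 1) (μ₀ x y) z = 0 := by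
  have hfirst := leibnizator_first_order (φ := φ) (hdef 1)
  rw [h0] at hfirst
  exact skewPart_pseudoPoisson hcomm hfirst

/-- If `(φ_i)` is a Leibniz formal deformation of a commutative Leibniz multiplication
`μ₀`, then the skew-symmetric part `ψ₁` of `φ₁` satisfies
`μ₀(x,ψ₁(y,z)) − ψ₁(y,μ₀(x,z)) − ψ₁(μ₀(x,y),z) = 0`:
`(A, μ₀, ψ₁)` is a pseudo-Poisson structure. -/
theorem leibniz_deformation_pseudo_poisson {K A : Type*} [Field K] [CharZero K]
    [AddCommGroup A] [Module K A]
    (μ₀ : A →ₗ[K] A →ₗ[K] A)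
    (hcomm : ∀ x y : A, μ₀ x y = μ₀ y x)
    (hleib : ∀ x y z : A, μ₀ x (μ₀ y z) = μ₀ (μ₀ x y) z + μ₀ y (μ₀ x z))
    (φ : ℕ → (A →ₗ[K] A →ₗ[K] A))
    (h0 : φ 0 = μ₀)
    (hdef : ∀ k : ℕ, ∀ x y z : A,
      ∑ p ∈ Finset.HasAntidiagonal.antidiagonal k,
        (φ p.1 x (φ p.2 y z) - φ p.1 (φ p.2 x y) z - φ p.1 y (φ p.2 x z)) = 0) :
    ∀ x y z : A,
      μ₀ x (skewPart (φ 1) y z) - skewPart (φ 1) y (μ₀ x z) -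
        skewPart (φ 1) (μ₀ x y) z = 0 :=
  leibniz_deformation_pseudo_poisson_general μ₀ hcomm φ h0 hdef
end

section
/- Let ρ be a symmetric K-bilinear map on A (ρ(x,y) = ρ(y,x)) and ψ a skew-symmetric K-bilinear map on A (ψ(x,y) = −ψ(y,x)), and define μ(x,y) = ρ(x,y) + ψ(x,y). Then μ is associative if and only if both of the following hold for all x,y,z ∈ A: (1) ψ(x,ρ(y,z)) = ρ(ψ(x,y),z) + ρ(y,ψ(x,z)); (2) ψ(y,ψ(x,z)) = ρ(ρ(x,y),z) − ρ(x,ρ(y,z)). -/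
/-!
Let `L(x,y,z) = ρ(ψ x y, z) + ρ(y, ψ x z) - ψ(x, ρ(y,z))` and
`J(x,y,z) = ρ(ρ(x,y),z) - ρ(x,ρ(y,z)) - ψ(y,ψ(x,z))` be the defects of the two conditions.
Expanding, the associator of `ρ + ψ` is `L(x,y,z) + L(z,x,y) + J(x,z,y) + J(y,x,z)`.
Since `L` is symmetric in its last two arguments and `J` is antisymmetric in its first and
third, this linear system over the six permutations of `(x,y,z)` can be inverted:
`4 L` and `4 J` are signed sums of the six permuted associators.
-/

namespace LinearMap

variable {R M : Type*} [CommSemiring R] [AddCommGroup M] [Module R M]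

def associator (μ : M →ₗ[R] M →ₗ[R] M) (x y z : M) : M :=
  μ (μ x y) z - μ x (μ y z)

variable (ρ ψ : M →ₗ[R] M →ₗ[R] M)

def leibnizDefect (x y z : M) : M :=
  ρ (ψ x y) z + ρ y (ψ x z) - ψ x (ρ y z)

def associatorDefect (x y z : M) : M :=
  associator ρ x y z - ψ y (ψ x z)

variable {ρ ψ}

theorem leibnizDefect_comm (hρ : ∀ x y : M, ρ x y = ρ y x) (x y z : M) :
    leibnizDefect ρ ψ x z y = leibnizDefect ρ ψ x y z := by
  rw [leibnizDefect, leibnizDefect, hρ z y, hρ (ψ x z) y, hρ z (ψ x y)]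
  abel

theorem associatorDefect_swap (hρ : ∀ x y : M, ρ x y = ρ y x)
    (hψ : ∀ x y : M, ψ x y = -ψ y x) (x y z : M) :
    associatorDefect ρ ψ z y x = -associatorDefect ρ ψ x y z := by
  rw [associatorDefect, associatorDefect, associator, associator, hρ z y, hρ y x,
    hρ (ρ y z) x, hρ z (ρ x y), hψ z x, map_neg]
  abel

theorem associator_add_eq (hρ : ∀ x y : M, ρ x y = ρ y x)
    (hψ : ∀ x y : M, ψ x y = -ψ y x) (x y z : M) :
    associator (ρ + ψ) x y z = leibnizDefect ρ ψ x y z + leibnizDefect ρ ψ z x y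
      + associatorDefect ρ ψ x z y + associatorDefect ρ ψ y x z := by
  simp only [associator, leibnizDefect, associatorDefect, add_apply, map_add]
  rw [hψ z x, hψ z y, hψ z (ρ x y), hψ z (ψ x y), hρ z y, hρ (ρ x z) y, hρ y x]
  simp only [map_neg, neg_apply]
  rw [hρ (ψ x z) y]
  abel

theorem four_smul_leibnizDefect (hρ : ∀ x y : M, ρ x y = ρ y x)
    (hψ : ∀ x y : M, ψ x y = -ψ y x) (x y z : M) :
    4 • leibnizDefect ρ ψ x y z = associator (ρ + ψ) x y z + associator (ρ + ψ) x z y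
      - associator (ρ + ψ) y x z + associator (ρ + ψ) y z x
      - associator (ρ + ψ) z x y + associator (ρ + ψ) z y x := by
  simp only [associator_add_eq hρ hψ, leibnizDefect_comm hρ x y z, leibnizDefect_comm hρ y x z,
    leibnizDefect_comm hρ z x y, associatorDefect_swap hρ hψ x y z,
    associatorDefect_swap hρ hψ y x z, associatorDefect_swap hρ hψ x z y]
  abel

theorem four_smul_associatorDefect (hρ : ∀ x y : M, ρ x y = ρ y x)
    (hψ : ∀ x y : M, ψ x y = -ψ y x) (x y z : M) :
    4 • associatorDefect ρ ψ x y z = associator (ρ + ψ) x y z + associator (ρ + ψ) x z y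
      + associator (ρ + ψ) y x z - associator (ρ + ψ) y z x
      - associator (ρ + ψ) z x y - associator (ρ + ψ) z y x := by
  simp only [associator_add_eq hρ hψ, leibnizDefect_comm hρ x y z, leibnizDefect_comm hρ y x z,
    leibnizDefect_comm hρ z x y, associatorDefect_swap hρ hψ x y z,
    associatorDefect_swap hρ hψ y x z, associatorDefect_swap hρ hψ x z y]
  abel

theorem associator_add_eq_zero_iff [IsAddTorsionFree M] (hρ : ∀ x y : M, ρ x y = ρ y x)
    (hψ : ∀ x y : M, ψ x y = -ψ y x) :
    (∀ x y z : M, associator (ρ + ψ) x y z = 0) ↔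
      (∀ x y z : M, leibnizDefect ρ ψ x y z = 0) ∧
      (∀ x y z : M, associatorDefect ρ ψ x y z = 0) := by
  constructor
  · intro h
    refine ⟨fun x y z => ?_, fun x y z => ?_⟩
    · simpa [h] using four_smul_leibnizDefect hρ hψ x y z
    · simpa [h] using four_smul_associatorDefect hρ hψ x y z
  · rintro ⟨hL, hJ⟩ x y z
    simp only [associator_add_eq hρ hψ, hL, hJ, add_zero]

variable {μ : M →ₗ[R] M →ₗ[R] M} {x y z : M}

theorem associator_eq_zero_iff : associator μ x y z = 0 ↔ μ x (μ y z) = μ (μ x y) z :=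
  sub_eq_zero.trans eq_comm

theorem leibnizDefect_eq_zero_iff :
    leibnizDefect ρ ψ x y z = 0 ↔ ψ x (ρ y z) = ρ (ψ x y) z + ρ y (ψ x z) :=
  sub_eq_zero.trans eq_comm

theorem associatorDefect_eq_zero_iff :
    associatorDefect ρ ψ x y z = 0 ↔ ψ y (ψ x z) = ρ (ρ x y) z - ρ x (ρ y z) :=
  sub_eq_zero.trans eq_comm

end LinearMap

/-- Polarization for associativity: if `μ = ρ + ψ` with `ρ` symmetric and `ψ`
skew-symmetric bilinear maps, then `μ` is associative iff
`ψ(x,ρ(y,z)) = ρ(ψ(x,y),z) + ρ(y,ψ(x,z))` and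
`ψ(y,ψ(x,z)) = ρ(ρ(x,y),z) − ρ(x,ρ(y,z))` for all `x,y,z`. -/
theorem associative_iff_polarization {K A : Type*} [Field K] [CharZero K]
    [AddCommGroup A] [Module K A]
    (ρ ψ : A →ₗ[K] A →ₗ[K] A)
    (hρ : ∀ x y : A, ρ x y = ρ y x)
    (hψ : ∀ x y : A, ψ x y = -ψ y x) :
    (∀ x y z : A, (ρ + ψ) x ((ρ + ψ) y z) = (ρ + ψ) ((ρ + ψ) x y) z) ↔
    ((∀ x y z : A, ψ x (ρ y z) = ρ (ψ x y) z + ρ y (ψ x z)) ∧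
     (∀ x y z : A, ψ y (ψ x z) = ρ (ρ x y) z - ρ x (ρ y z))) := by
  have := IsAddTorsionFree.of_isTorsionFree K A
  simpa only [LinearMap.associator_eq_zero_iff, LinearMap.leibnizDefect_eq_zero_iff,
    LinearMap.associatorDefect_eq_zero_iff] using LinearMap.associator_add_eq_zero_iff hρ hψ
end
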